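/- arXiv:2605.04849 — 7 statements merged into one kernel-verified Lean document; each statement's English description precedes it below -/
import Mathlib

section
/- Let p be a prime and a a positive integer, and let A be the adjacency matrix of the modified divisor prime graph G*_Dp(p^a), i.e. the real symmetric matrix indexed by the positive divisors of p^a with A_{u,v} = 1 if gcd(u,v) = 1 and 0 otherwise (so A_{1,1} = 1). If λ_1, …, λ_{a+1} are the eigenvalues of A, then Σ_i |λ_i − 1/(a+1)| = √(4a+1) + (a−1)/(a+1). -/
lemma gcd_one_iff {p a : ℕ} (hp : p.Prime) {u v : ℕ} (hu : u ∈ (p^a).divisors)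
    (hv : v ∈ (p^a).divisors) : Nat.gcd u v = 1 ↔ u = 1 ∨ v = 1 := by
  constructor
  · intro h
    by_contra hc
    push_neg at hc
    obtain ⟨h1, h2⟩ := hc
    obtain ⟨i, hi, rfl⟩ := (Nat.mem_divisors_prime_pow hp a).mp hu
    obtain ⟨j, hj, rfl⟩ := (Nat.mem_divisors_prime_pow hp a).mp hv
    have hi0 : i ≠ 0 := by rintro rfl; simp at h1
    have hj0 : j ≠ 0 := by rintro rfl; simp at h2
    have : p ∣ Nat.gcd (p^i) (p^j) :=
      Nat.dvd_gcd (dvd_pow_self p hi0) (dvd_pow_self p hj0)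
    rw [h] at this
    exact hp.one_lt.ne' (Nat.eq_one_of_dvd_one this) |>.elim
  · rintro (rfl | rfl) <;> simp

/-- The energy of the modified divisor prime graph of `p ^ a` (adjacency matrix `A` with
`A u v = 1` iff `gcd u v = 1`, so there is a self-loop at the vertex `1`) equals
`√(4a+1) + (a-1)/(a+1)`, where the energy is `∑ |λᵢ - 1/(a+1)|`. -/
theorem energy_modifiedDivisorPrimeGraph_primePow (p a : ℕ) (hp : p.Prime) (ha : 0 < a)
    (A : Matrix {d : ℕ // d ∈ (p ^ a).divisors} {d : ℕ // d ∈ (p ^ a).divisors} ℝ)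
    (hA : ∀ u v : {d : ℕ // d ∈ (p ^ a).divisors},
      A u v = if Nat.gcd u.1 v.1 = 1 then 1 else 0)
    (hHerm : A.IsHermitian) :
    ∑ i, |hHerm.eigenvalues i - 1 / ((a : ℝ) + 1)| =
      Real.sqrt (4 * (a : ℝ) + 1) + ((a : ℝ) - 1) / ((a : ℝ) + 1) := by
  have hpa : p ^ a ≠ 0 := pow_ne_zero a hp.ne_zero
  have h1mem : (1 : ℕ) ∈ (p ^ a).divisors := Nat.one_mem_divisors.mpr hpa
  set e : {d : ℕ // d ∈ (p ^ a).divisors} := ⟨1, h1mem⟩ with he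
  have hA' : ∀ u v, A u v = if u = e ∨ v = e then 1 else 0 := by
    intro u v
    rw [hA u v]
    congr 1
    rw [gcd_one_iff hp u.2 v.2]
    simp [he, Subtype.ext_iff]
  have hcard0 : (p ^ a).divisors.card = a + 1 := by
    rw [Nat.divisors_prime_pow hp, Finset.card_map, Finset.card_range]
  have hcard : Fintype.card {d : ℕ // d ∈ (p ^ a).divisors} = a + 1 := by
    rw [Fintype.card_coe, hcard0]
  have hsq : ∀ u v, (A * A) u v = (if u = e ∧ v = e then (a : ℝ) else 0) + 1 := by
    intro u v
    rw [Matrix.mul_apply]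
    simp only [hA']
    by_cases hu : u = e <;> by_cases hv : v = e <;>
      simp [hu, hv, Finset.card_univ, hcard, hcard0]
  have hcube : A * A * A = A * A + (a : ℝ) • A := by
    ext u v
    rw [Matrix.mul_apply]
    simp only [hsq, hA', Matrix.add_apply, Matrix.smul_apply, smul_eq_mul]
    by_cases hu : u = e <;> by_cases hv : v = e <;>
      simp [hu, hv, add_mul, ite_mul, Finset.sum_add_distrib,
        Finset.card_univ, hcard, hcard0] <;> ring
  have hcube' : ∀ j, hHerm.eigenvalues j ^ 3
      = hHerm.eigenvalues j ^ 2 + (a : ℝ) * hHerm.eigenvalues j := by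
    intro j
    set f := hHerm.eigenvalues j with hf
    set v : {d : ℕ // d ∈ (p ^ a).divisors} → ℝ := ⇑(hHerm.eigenvectorBasis j) with hvdef
    have hv : A.mulVec v = f • v := hHerm.mulVec_eigenvectorBasis j
    obtain ⟨x, hx⟩ : ∃ x, v x ≠ 0 := by
      by_contra h
      push_neg at h
      exact hHerm.eigenvectorBasis.orthonormal.ne_zero j (by ext x; exact h x)
    have h3 : (A * A * A).mulVec v = (f ^ 3) • v := by
      simp only [← Matrix.mulVec_mulVec, hv, Matrix.mulVec_smul, smul_smul]
      module
    have h2 : (A * A + (a : ℝ) • A).mulVec v = (f ^ 2 + a * f) • v := by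
      simp only [Matrix.add_mulVec, Matrix.smul_mulVec, ← Matrix.mulVec_mulVec, hv,
        Matrix.mulVec_smul, smul_smul]
      module
    rw [hcube, h2] at h3
    have hx3 := congrFun h3 x
    simp only [Pi.smul_apply, smul_eq_mul] at hx3
    exact (mul_right_cancel₀ hx hx3).symm
  set U := (hHerm.eigenvectorUnitary :
    Matrix {d : ℕ // d ∈ (p ^ a).divisors} {d : ℕ // d ∈ (p ^ a).divisors} ℝ) with hUdef
  set D : Matrix {d : ℕ // d ∈ (p ^ a).divisors} {d : ℕ // d ∈ (p ^ a).divisors} ℝ :=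
    Matrix.diagonal hHerm.eigenvalues with hDdef
  have hUs : star U * U = 1 := hHerm.eigenvectorUnitary.2.1
  have hspec : A = U * D * star U := by
    have hsp := hHerm.spectral_theorem
    rwa [show (RCLike.ofReal ∘ hHerm.eigenvalues : _ → ℝ) = hHerm.eigenvalues from
      funext fun i => rfl] at hsp
  have htrA : Matrix.trace A = ∑ i, hHerm.eigenvalues i := by
    rw [congrArg Matrix.trace hspec, Matrix.trace_mul_comm, ← Matrix.mul_assoc, hUs, Matrix.one_mul, hDdef,
      Matrix.trace_diagonal]
  have hAA : A * A = U * (D * D) * star U := by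
    rw [hspec]
    simp only [Matrix.mul_assoc]
    rw [← Matrix.mul_assoc (star U) U, hUs, Matrix.one_mul]
  have htrAA : Matrix.trace (A * A) = ∑ i, hHerm.eigenvalues i ^ 2 := by
    rw [congrArg Matrix.trace hAA, Matrix.trace_mul_comm, ← Matrix.mul_assoc, hUs, Matrix.one_mul, hDdef,
      Matrix.diagonal_mul_diagonal, Matrix.trace_diagonal]
    simp [sq]
  have hsum1 : ∑ i, hHerm.eigenvalues i = 1 := by
    rw [← htrA, Matrix.trace]
    simp only [Matrix.diag_apply, hA', or_self]
    simp
  have hsum2 : ∑ i, hHerm.eigenvalues i ^ 2 = 2 * (a : ℝ) + 1 := by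
    rw [← htrAA, Matrix.trace]
    simp only [Matrix.diag_apply, hsq, and_self]
    rw [Finset.sum_add_distrib]
    simp [Finset.card_univ, hcard, hcard0]
    ring
  clear hcube hAA htrA htrAA hspec hUs hA hA' hsq
  set F := hHerm.eigenvalues with hF
  set s := Real.sqrt (4 * (a : ℝ) + 1) with hsdef
  have ha1 : (1 : ℝ) ≤ (a : ℝ) := by exact_mod_cast ha
  have hs2 : s ^ 2 = 4 * (a : ℝ) + 1 := Real.sq_sqrt (by positivity)
  have hs0 : 0 ≤ s := Real.sqrt_nonneg _
  have hs1 : 1 ≤ s := by nlinarith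
  set c : ℝ := 1 / ((a : ℝ) + 1) with hc
  have hc0 : 0 ≤ c := by positivity
  have hc1 : c ≤ 1 := by rw [hc]; rw [div_le_one (by linarith)]; linarith
  have htri : ∀ j, F j = 0 ∨ F j = (1 + s) / 2 ∨ F j = (1 - s) / 2 := by
    intro j
    have h := hcube' j
    have hz : F j * (F j - (1 + s) / 2) * (F j - (1 - s) / 2) = 0 := by
      linear_combination h - F j / 4 * hs2
    rcases mul_eq_zero.mp hz with hz1 | hz2
    · rcases mul_eq_zero.mp hz1 with h0 | h1
      · exact Or.inl h0
      · exact Or.inr (Or.inl (by linarith [sub_eq_zero.mp h1]))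
    · exact Or.inr (Or.inr (by linarith [sub_eq_zero.mp hz2]))
  obtain ⟨i0, hi0⟩ : ∃ i0, F i0 = (1 + s) / 2 := by
    by_contra h
    push_neg at h
    have hle : ∀ j, F j ≤ 0 := by
      intro j
      rcases htri j with h0 | h1 | h2
      · exact h0.le
      · exact absurd h1 (h j)
      · rw [h2]; linarith
    have : ∑ i, F i ≤ 0 := Finset.sum_nonpos fun j _ => hle j
    linarith [hsum1]
  obtain ⟨j0, hj0⟩ : ∃ j0, F j0 = (1 - s) / 2 := by
    by_contra h
    push_neg at h
    have hsq' : ∀ j, F j ^ 2 = (1 + s) / 2 * F j := by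
      intro j
      rcases htri j with h0 | h1 | h2
      · rw [h0]; ring
      · rw [h1]; ring
      · exact absurd h2 (h j)
    have : ∑ i, F i ^ 2 = (1 + s) / 2 * ∑ i, F i := by
      rw [Finset.mul_sum]; exact Finset.sum_congr rfl fun j _ => hsq' j
    rw [hsum1, hsum2, mul_one] at this
    nlinarith
  have hij : i0 ≠ j0 := by
    intro h
    rw [h, hj0] at hi0
    nlinarith
  set s1 : Finset {d : ℕ // d ∈ (p ^ a).divisors} := Finset.univ.erase i0 with hs1def
  set s2 : Finset {d : ℕ // d ∈ (p ^ a).divisors} := s1.erase j0 with hs2def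
  have hj0s1 : j0 ∈ s1 := Finset.mem_erase.mpr ⟨Ne.symm hij, Finset.mem_univ _⟩
  have hsplit : ∀ g : {d : ℕ // d ∈ (p ^ a).divisors} → ℝ,
      ∑ i, g i = g i0 + (g j0 + ∑ k ∈ s2, g k) := by
    intro g
    rw [← Finset.add_sum_erase _ g (Finset.mem_univ i0), ← Finset.add_sum_erase _ g hj0s1]
  have hzero : ∀ k ∈ s2, F k = 0 := by
    have h2 : ∑ k ∈ s2, F k ^ 2 = 0 := by
      have := hsplit (fun i => F i ^ 2)
      rw [hsum2, hi0, hj0] at this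
      nlinarith [this]
    intro k hk
    have := (Finset.sum_eq_zero_iff_of_nonneg (fun k _ => sq_nonneg (F k))).mp h2 k hk
    exact pow_eq_zero_iff (n := 2) (by norm_num) |>.mp this
  have hcard2 : (s2.card : ℝ) = (a : ℝ) - 1 := by
    rw [hs2def, Finset.card_erase_of_mem hj0s1, hs1def,
      Finset.card_erase_of_mem (Finset.mem_univ _), Finset.card_univ, hcard]
    rw [show a + 1 - 1 - 1 = a - 1 by omega, Nat.cast_sub ha]
    norm_num
  rw [hsplit (fun i => |F i - c|)]
  have e1 : |F i0 - c| = (1 + s) / 2 - c := by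
    rw [hi0, abs_of_nonneg]; linarith
  have e2 : |F j0 - c| = c - (1 - s) / 2 := by
    rw [hj0, abs_of_nonpos] <;> linarith
  have e3 : ∑ k ∈ s2, |F k - c| = ((a : ℝ) - 1) * c := by
    rw [Finset.sum_congr rfl (fun k hk => by rw [hzero k hk, zero_sub, abs_neg, abs_of_nonneg hc0]),
      Finset.sum_const, nsmul_eq_mul, hcard2]
  rw [e1, e2, e3, hc]
  field_simp
  ring
end

section
/- Let p be a prime and a a positive integer, and let A be the adjacency matrix of the modified divisor prime graph G*_Dp(p^a) (a matrix of size (a+1)×(a+1)). Then the characteristic polynomial of A satisfies det(x·I − A) = x^{a−1}·(x² − x − a). -/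
/-!
The divisors of `p ^ a` are the powers of `p`, and two of them are coprime exactly when one of
them is `1`. So the adjacency matrix is that of a star centred at `1` with a loop at the centre.
This matrix has rank two: it factors as `U * V` through `Fin 2`, with columns `𝟙_{c}`, `1 - 𝟙_{c}`
of `U` and rows `1`, `𝟙_{c}` of `V`. Hence its characteristic polynomial is `X ^ (a - 1)` times
that of the `2 × 2` matrix `V * U = !![1, a; 1, 0]`, namely `X ^ 2 - X - a`.
-/

open Polynomial

namespace Matrix

variable (R : Type*) {ι : Type*} [CommRing R] [DecidableEq ι]

def loopedStar (c : ι) : Matrix ι ι R :=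
  of fun i j => if i = c ∨ j = c then 1 else 0

def loopedStarLeft (c : ι) : Matrix ι (Fin 2) R :=
  of fun i => ![if i = c then 1 else 0, if i = c then 0 else 1]

def loopedStarRight (c : ι) : Matrix (Fin 2) ι R :=
  of ![fun _ => 1, fun j => if j = c then 1 else 0]

theorem loopedStarLeft_mul_loopedStarRight (c : ι) :
    loopedStarLeft R c * loopedStarRight R c = loopedStar R c := by
  ext i j
  by_cases hi : i = c <;> by_cases hj : j = c <;>
    simp [loopedStar, loopedStarLeft, loopedStarRight, mul_apply, Fin.sum_univ_two, hi, hj]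

theorem loopedStarRight_mul_loopedStarLeft [Fintype ι] (c : ι) :
    loopedStarRight R c * loopedStarLeft R c = !![1, (Fintype.card ι : R) - 1; 1, 0] := by
  have : Nonempty ι := ⟨c⟩
  ext k l
  fin_cases k <;> fin_cases l <;>
    simp +contextual [loopedStarLeft, loopedStarRight, mul_apply, Finset.sum_ite,
      Finset.filter_ne', Nat.cast_pred Fintype.card_pos]

theorem charpoly_loopedStar [Fintype ι] [Nontrivial R] (c : ι) (h : 2 ≤ Fintype.card ι) :
    (loopedStar R c).charpoly =
      X ^ (Fintype.card ι - 2) * (X ^ 2 - X - C ((Fintype.card ι : R) - 1)) := by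
  rw [← loopedStarLeft_mul_loopedStarRight, charpoly_mul_comm_of_le _ _ (by simpa using h),
    loopedStarRight_mul_loopedStarLeft, charpoly_fin_two, Fintype.card_fin]
  simp [trace_fin_two, det_fin_two]
  ring

end Matrix

theorem Nat.coprime_iff_eq_one_or_eq_one_of_dvd_prime_pow {p a u v : ℕ} (hp : p.Prime)
    (hu : u ∣ p ^ a) (hv : v ∣ p ^ a) : u.Coprime v ↔ u = 1 ∨ v = 1 := by
  obtain ⟨i, -, rfl⟩ := (Nat.dvd_prime_pow hp).mp hu
  obtain ⟨j, -, rfl⟩ := (Nat.dvd_prime_pow hp).mp hv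
  rcases Nat.eq_zero_or_pos i with rfl | hi
  · simp
  rcases Nat.eq_zero_or_pos j with rfl | hj
  · simp
  simp [Nat.coprime_pow_left_iff hi, Nat.coprime_pow_right_iff hj, hp.one_lt.ne', hi.ne', hj.ne']

/-- The characteristic polynomial of the adjacency matrix `A` of the modified divisor
prime graph of `p ^ a` satisfies `det (X • I - A) = X ^ (a-1) * (X ^ 2 - X - a)`. -/
theorem charpoly_modifiedDivisorPrimeGraph_primePow (p a : ℕ) (hp : p.Prime) (ha : 0 < a)
    (A : Matrix {d : ℕ // d ∈ (p ^ a).divisors} {d : ℕ // d ∈ (p ^ a).divisors} ℝ)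
    (hA : ∀ u v : {d : ℕ // d ∈ (p ^ a).divisors},
      A u v = if Nat.gcd u.1 v.1 = 1 then 1 else 0) :
    A.charpoly = X ^ (a - 1) * (X ^ 2 - X - C (a : ℝ)) := by
  let one : {d : ℕ // d ∈ (p ^ a).divisors} :=
    ⟨1, Nat.one_mem_divisors.mpr (pow_ne_zero a hp.ne_zero)⟩
  have hA_eq : A = Matrix.loopedStar ℝ one := by
    ext u v
    simp only [hA, Nat.coprime_iff_eq_one_or_eq_one_of_dvd_prime_pow
      hp (Nat.dvd_of_mem_divisors u.2) (Nat.dvd_of_mem_divisors v.2)]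
    simp [Matrix.loopedStar, one, Subtype.ext_iff]
  have hcard : Fintype.card {d : ℕ // d ∈ (p ^ a).divisors} = a + 1 := by
    simp [Nat.divisors_prime_pow hp]
  rw [hA_eq, Matrix.charpoly_loopedStar ℝ one (by omega), hcard]
  simp
end

section
/- Let m and n be coprime positive integers. For all divisors d₁, e₁ of m and all divisors d₂, e₂ of n, the adjacency matrices of the modified divisor prime graphs satisfy A(mn)_{d₁d₂, e₁e₂} = A(m)_{d₁, e₁} · A(n)_{d₂, e₂}; that is, under the bijection between divisors of mn and pairs of divisors of m and n, A(mn) is the Kronecker (tensor) product A(m) ⊗ A(n). -/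
/-- For coprime positive integers `m`, `n`, under the bijection between divisors of
`m * n` and pairs of divisors of `m` and of `n`, the adjacency matrix of the modified
divisor prime graph of `m * n` is the Kronecker product of those of `m` and `n`:
`A(mn)_{d₁d₂, e₁e₂} = A(m)_{d₁,e₁} * A(n)_{d₂,e₂}`. -/
theorem modifiedDivisorPrimeGraph_adjMatrix_kronecker (m n : ℕ) (hm : 0 < m) (hn : 0 < n)
    (hmn : Nat.Coprime m n)
    (A : (N : ℕ) → Matrix {d : ℕ // d ∈ N.divisors} {d : ℕ // d ∈ N.divisors} ℝ)
    (hA : ∀ (N : ℕ) (u v : {d : ℕ // d ∈ N.divisors}),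
      A N u v = if Nat.gcd u.1 v.1 = 1 then 1 else 0)
    (d₁ e₁ : {d : ℕ // d ∈ m.divisors}) (d₂ e₂ : {d : ℕ // d ∈ n.divisors}) :
    A (m * n)
        ⟨d₁.1 * d₂.1, Nat.mem_divisors.mpr
          ⟨mul_dvd_mul (Nat.mem_divisors.mp d₁.2).1 (Nat.mem_divisors.mp d₂.2).1,
            mul_ne_zero hm.ne' hn.ne'⟩⟩
        ⟨e₁.1 * e₂.1, Nat.mem_divisors.mpr
          ⟨mul_dvd_mul (Nat.mem_divisors.mp e₁.2).1 (Nat.mem_divisors.mp e₂.2).1,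
            mul_ne_zero hm.ne' hn.ne'⟩⟩
      = A m d₁ e₁ * A n d₂ e₂ := by
  rw [hA, hA, hA]
  have hd1 : d₁.1 ∣ m := (Nat.mem_divisors.mp d₁.2).1
  have he1 : e₁.1 ∣ m := (Nat.mem_divisors.mp e₁.2).1
  have hd2 : d₂.1 ∣ n := (Nat.mem_divisors.mp d₂.2).1
  have he2 : e₂.1 ∣ n := (Nat.mem_divisors.mp e₂.2).1
  have key : Nat.gcd (d₁.1 * d₂.1) (e₁.1 * e₂.1) = 1 ↔
      (Nat.gcd d₁.1 e₁.1 = 1 ∧ Nat.gcd d₂.1 e₂.1 = 1) := by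
    constructor
    · intro h
      have h' : Nat.Coprime (d₁.1 * d₂.1) (e₁.1 * e₂.1) := h
      exact ⟨(h'.coprime_dvd_left (dvd_mul_right _ _)).coprime_dvd_right
          (dvd_mul_right _ _),
        (h'.coprime_dvd_left (dvd_mul_left _ _)).coprime_dvd_right (dvd_mul_left _ _)⟩
    · rintro ⟨h1, h2⟩
      have c12 : Nat.Coprime d₁.1 e₂.1 :=
        (hmn.coprime_dvd_left hd1).coprime_dvd_right he2
      have c21 : Nat.Coprime d₂.1 e₁.1 :=
        ((hmn.symm.coprime_dvd_left hd2).coprime_dvd_right he1)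
      exact (Nat.Coprime.mul_right h1 c12).mul (Nat.Coprime.mul_right c21 h2)
  by_cases h1 : Nat.gcd d₁.1 e₁.1 = 1 <;> by_cases h2 : Nat.gcd d₂.1 e₂.1 = 1 <;>
    simp [h1, h2, key]
end

section
/- Let n > 1 be an integer with prime factorization n = p_1^{a_1}···p_r^{a_r} (distinct primes p_i, each a_i ≥ 1), let τ(n) be the number of positive divisors of n, and let A(n) be the adjacency matrix of the modified divisor prime graph G*_Dp(n), with eigenvalues λ_1, …, λ_{τ(n)}. Then Σ_i |λ_i − 1/τ(n)| = Π_{i=1}^r √(4a_i + 1) + 1 − 2^r/τ(n). -/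
/-!
Index the divisors of `n = ∏ p ^ a_p` by their exponent vectors. Then `A(n)` is the Kronecker
product over `p ∣ n` of the `(a_p + 1) × (a_p + 1)` matrices `B(a)` with `B(a)_{kl} = 1` iff
`k = 0` or `l = 0`. Each `B(a)` has rank two: `B(a) = ∑_± ±(4a+1)^{-1/2} u_± u_±ᵀ`, where
`m_± = (1 ± √(4a+1))/2` are the roots of `x² = x + a` and `u_± = (m_±, 1, …, 1)` are orthogonal
with `‖u_±‖² = ±√(4a+1) m_±`. Tensoring gives `A(n) = U D Uᵀ` with `UᵀU` diagonal, so the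
spectrum of `A(n)` consists of the `2^r` products `λ_ε = ∏_p m_{ε_p}` and `τ(n) - 2^r` zeros.
Since `|m_±| (a + 1) ≥ 1`, every `|λ_ε| ≥ 1/τ(n)`, hence `|λ_ε - 1/τ(n)| = |λ_ε| - sign(λ_ε)/τ(n)`;
the signs cancel over all `ε`, and `∑_ε |λ_ε| = ∏_p (|m_+| + |m_-|) = ∏_p √(4a_p + 1)`.
-/

open Finset Matrix Polynomial

theorem Polynomial.roots_prod_X_sub_C_univ {R ι : Type*} [CommRing R] [IsDomain R] [Fintype ι]
    (f : ι → R) : (∏ i, (X - C (f i))).roots = Finset.univ.val.map f := by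
  rw [Finset.prod_eq_multiset_prod, ← roots_multiset_prod_X_sub_C (Finset.univ.val.map f),
    Multiset.map_map]
  rfl

/-- `UW` and `WU` have the same nonzero eigenvalues (`Matrix.charpoly_mul_comm'`). -/
theorem Matrix.IsHermitian.replicate_add_eigenvalues_eq {𝕜 m k : Type*} [RCLike 𝕜]
    [Fintype m] [DecidableEq m] [Fintype k] [DecidableEq k] {A : Matrix m m 𝕜}
    (hA : A.IsHermitian) {U : Matrix m k 𝕜} {W : Matrix k m 𝕜} {μ : k → 𝕜}
    (hUW : U * W = A) (hWU : W * U = diagonal μ) :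
    Multiset.replicate (Fintype.card k) 0 + Finset.univ.val.map (fun i => (hA.eigenvalues i : 𝕜)) =
      Multiset.replicate (Fintype.card m) 0 + Finset.univ.val.map μ := by
  have h := congrArg Polynomial.roots (charpoly_mul_comm' U W)
  rwa [hUW, hWU, hA.charpoly_eq, charpoly_diagonal, roots_mul, roots_mul, roots_X_pow, roots_X_pow,
    roots_prod_X_sub_C_univ, roots_prod_X_sub_C_univ, Multiset.nsmul_singleton,
    Multiset.nsmul_singleton] at h
  all_goals exact ((monic_X_pow _).mul (monic_prod_of_monic _ _ fun i _ => monic_X_sub_C _)).ne_zero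

theorem Matrix.IsHermitian.card_nsmul_add_sum_eigenvalues_eq {𝕜 m k M : Type*} [RCLike 𝕜]
    [AddCommMonoid M]
    [Fintype m] [DecidableEq m] [Fintype k] [DecidableEq k] {A : Matrix m m 𝕜}
    (hA : A.IsHermitian) {U : Matrix m k 𝕜} {W : Matrix k m 𝕜} {μ : k → 𝕜}
    (hUW : U * W = A) (hWU : W * U = diagonal μ) (f : 𝕜 → M) :
    Fintype.card k • f 0 + ∑ i, f (hA.eigenvalues i) =
      Fintype.card m • f 0 + ∑ j, f (μ j) := by
  have h := congrArg (fun s => (s.map f).sum) (hA.replicate_add_eigenvalues_eq hUW hWU)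
  simp only [Multiset.map_add, Multiset.sum_add, Multiset.map_replicate, Multiset.sum_replicate,
    Multiset.map_map] at h
  exact h

theorem Nat.coprime_iff_forall_mem_primeFactors {n d e : ℕ} (hn : n ≠ 0) (hd : d ∣ n) (he : e ∣ n) :
    d.Coprime e ↔ ∀ p ∈ n.primeFactors, d.factorization p = 0 ∨ e.factorization p = 0 := by
  have hd0 : d ≠ 0 := ne_zero_of_dvd_ne_zero hn hd
  have he0 : e ≠ 0 := ne_zero_of_dvd_ne_zero hn he
  rw [← Nat.disjoint_primeFactors hd0 he0, Finset.disjoint_left]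
  simp only [← Nat.support_factorization d, ← Nat.support_factorization e, Finsupp.mem_support_iff]
  refine ⟨fun h p _ => ?_, fun h p hpd hpe => ?_⟩
  · by_contra! hp
    exact h hp.1 hp.2
  · have hp : p ∈ n.primeFactors :=
      Nat.primeFactors_mono hd hn (by rwa [← Nat.support_factorization, Finsupp.mem_support_iff])
    rcases h p hp with h' | h' <;> contradiction

theorem Nat.factorization_eq_zero_of_dvd_of_notMem_primeFactors {n d p : ℕ} (hn : n ≠ 0)
    (hd : d ∣ n) (hp : p ∉ n.primeFactors) : d.factorization p = 0 :=
  Finsupp.notMem_support_iff.mp fun hpd =>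
    hp (Nat.primeFactors_mono hd hn (Nat.support_factorization d ▸ hpd))

noncomputable def Nat.divisorsEquivPiFin {n : ℕ} (hn : n ≠ 0) :
    n.divisors ≃ ∀ p : n.primeFactors, Fin (n.factorization p + 1) :=
  Equiv.ofBijective
    (fun d p => ⟨(d : ℕ).factorization p,
      Nat.lt_succ_of_le <| (Nat.factorization_le_iff_dvd (Nat.pos_of_mem_divisors d.2).ne' hn).2
        (Nat.dvd_of_mem_divisors d.2) p⟩) <| by
    rw [Fintype.bijective_iff_injective_and_card]
    refine ⟨fun d e hde => Subtype.ext <| Nat.factorization_inj (Nat.pos_of_mem_divisors d.2).ne'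
      (Nat.pos_of_mem_divisors e.2).ne' <| Finsupp.ext fun q => ?_, ?_⟩
    · by_cases hq : q ∈ n.primeFactors
      · exact congrArg Fin.val (congrFun hde ⟨q, hq⟩)
      · rw [factorization_eq_zero_of_dvd_of_notMem_primeFactors hn (dvd_of_mem_divisors d.2) hq,
          factorization_eq_zero_of_dvd_of_notMem_primeFactors hn (dvd_of_mem_divisors e.2) hq]
    · simpa [Nat.card_divisors hn, Fintype.card_pi] using (prod_attach _ _).symm

theorem Nat.sum_divisors_prod_factorization {R : Type*} [CommSemiring R] {n : ℕ} (hn : n ≠ 0)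
    (g : n.primeFactors → ℕ → R) :
    ∑ d : n.divisors, ∏ p : n.primeFactors, g p ((d : ℕ).factorization p) =
      ∏ p : n.primeFactors, ∑ k ∈ range (n.factorization p + 1), g p k := by
  calc _ = ∑ k : ∀ p : n.primeFactors, Fin (n.factorization p + 1), ∏ p, g p (k p) :=
        Fintype.sum_equiv (divisorsEquivPiFin hn) _ _ fun _ => rfl
    _ = ∏ p : n.primeFactors, ∑ k : Fin (n.factorization p + 1), g p k :=
        (Fintype.prod_sum fun (p : n.primeFactors) (k : Fin (n.factorization p + 1)) => g p k).symm
    _ = _ := prod_congr rfl fun p _ => Fin.sum_univ_eq_sum_range (g p) _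

theorem sum_neg_one_pow_sum_eq_zero {ι R : Type*} [Fintype ι] [DecidableEq ι] [Nonempty ι]
    [CommRing R] :
    ∑ ε : ι → Fin 2, (-1 : R) ^ ∑ i, (ε i : ℕ) = 0 := by
  simp_rw [← prod_pow_eq_pow_sum]
  rw [← Fintype.prod_sum fun (_ : ι) (j : Fin 2) => (-1 : R) ^ (j : ℕ)]
  exact prod_eq_zero (mem_univ (Classical.arbitrary ι)) (by simp)

theorem abs_neg_one_pow_mul_sub {t c : ℝ} (k : ℕ) (hc : 0 ≤ c) (hct : c ≤ t) :
    |(-1) ^ k * t - c| = t - (-1) ^ k * c := by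
  rcases neg_one_pow_eq_or ℝ k with h | h <;> rw [h]
  · rw [abs_of_nonneg] <;> linarith
  · rw [abs_of_nonpos] <;> linarith

namespace DivisorPrimeGraph

noncomputable def localEigenvalue (a : ℕ) (i : Fin 2) : ℝ := (1 + (-1) ^ (i : ℕ) * √(4 * a + 1)) / 2

noncomputable def localEigenvector (a : ℕ) (i : Fin 2) (k : ℕ) : ℝ :=
  if k = 0 then localEigenvalue a i else 1

variable {a : ℕ}

lemma one_le_sqrt_four_mul_add_one (a : ℕ) : 1 ≤ √(4 * a + 1 : ℝ) :=
  Real.one_le_sqrt.mpr (by linarith [a.cast_nonneg (α := ℝ)])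

lemma sq_sqrt_four_mul_add_one (a : ℕ) : √(4 * a + 1 : ℝ) ^ 2 = 4 * a + 1 :=
  Real.sq_sqrt (by positivity)

lemma localEigenvalue_sq_add (i : Fin 2) :
    localEigenvalue a i ^ 2 + a = (-1) ^ (i : ℕ) * √(4 * a + 1) * localEigenvalue a i := by
  have hs := sq_sqrt_four_mul_add_one a
  fin_cases i <;> simp [localEigenvalue] <;> linear_combination -hs / 4

lemma neg_one_pow_div_sqrt_mul_localEigenvalue_sq_add (i : Fin 2) :
    (-1) ^ (i : ℕ) / √(4 * a + 1) * (localEigenvalue a i ^ 2 + a) = localEigenvalue a i := by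
  have hs := (one_le_sqrt_four_mul_add_one a).trans_lt' one_pos |>.ne'
  rw [localEigenvalue_sq_add]
  fin_cases i <;> field_simp <;> ring

lemma sum_range_localEigenvector_mul (i j : Fin 2) :
    ∑ k ∈ range (a + 1), localEigenvector a i k * localEigenvector a j k =
      if i = j then localEigenvalue a i ^ 2 + a else 0 := by
  have hs := sq_sqrt_four_mul_add_one a
  simp only [sum_range_succ', localEigenvector, Nat.succ_ne_zero, if_false, if_true, mul_one,
    sum_const, card_range, nsmul_eq_mul]
  rcases eq_or_ne i j with rfl | hij
  · simp only [if_true]; ring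
  · obtain ⟨rfl, rfl⟩ | ⟨rfl, rfl⟩ : i = 0 ∧ j = 1 ∨ i = 1 ∧ j = 0 := by omega
    all_goals simp [localEigenvalue]; linear_combination -hs / 4

lemma sum_localEigenvector_mul_localEigenvector (k l : ℕ) :
    ∑ i : Fin 2, (-1) ^ (i : ℕ) / √(4 * a + 1) * localEigenvector a i k * localEigenvector a i l =
      if k = 0 ∨ l = 0 then 1 else 0 := by
  have hs := (one_le_sqrt_four_mul_add_one a).trans_lt' one_pos |>.ne'
  by_cases hk : k = 0 <;> by_cases hl : l = 0 <;>
    simp [localEigenvector, localEigenvalue, hk, hl] <;> field_simp <;> ring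

lemma abs_localEigenvalue_zero_add_one :
    |localEigenvalue a 0| + |localEigenvalue a 1| = √(4 * a + 1) := by
  have := one_le_sqrt_four_mul_add_one a
  rw [abs_of_nonneg, abs_of_nonpos] <;> simp [localEigenvalue] <;> linarith

lemma localEigenvalue_eq_neg_one_pow_mul_abs (i : Fin 2) :
    localEigenvalue a i = (-1) ^ (i : ℕ) * |localEigenvalue a i| := by
  have := one_le_sqrt_four_mul_add_one a
  fin_cases i
  · rw [abs_of_nonneg] <;> simp [localEigenvalue]; linarith
  · rw [abs_of_nonpos] <;> simp [localEigenvalue]; linarith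

lemma one_le_abs_localEigenvalue_mul (ha : 0 < a) (i : Fin 2) :
    1 ≤ |localEigenvalue a i| * (a + 1) := by
  have ha' : (1 : ℝ) ≤ a := by exact_mod_cast ha
  have : 2 ≤ √(4 * a + 1 : ℝ) := Real.le_sqrt_of_sq_le (by linarith)
  fin_cases i
  · rw [abs_of_nonneg] <;> simp [localEigenvalue] <;> nlinarith
  · rw [abs_of_nonpos] <;> simp [localEigenvalue] <;> nlinarith

variable (n : ℕ)

def adjMatrix : Matrix n.divisors n.divisors ℝ :=
  Matrix.of fun u v => if Nat.gcd u v = 1 then 1 else 0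

noncomputable def eigenvectorMatrix : Matrix n.divisors (n.primeFactors → Fin 2) ℝ :=
  Matrix.of fun d ε => ∏ p : n.primeFactors,
    localEigenvector (n.factorization p) (ε p) ((d : ℕ).factorization p)

noncomputable def eigenvalue (ε : n.primeFactors → Fin 2) : ℝ :=
  ∏ p : n.primeFactors, localEigenvalue (n.factorization p) (ε p)

noncomputable def eigenvectorWeight (ε : n.primeFactors → Fin 2) : ℝ :=
  ∏ p : n.primeFactors, (-1) ^ (ε p : ℕ) / √(4 * n.factorization p + 1)

variable {n}

theorem adjMatrix_eq (hn : n ≠ 0) :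
    adjMatrix n =
      eigenvectorMatrix n * diagonal (eigenvectorWeight n) * (eigenvectorMatrix n)ᵀ := by
  ext d e
  have hcop : Nat.gcd d e = 1 ↔
      ∀ p : n.primeFactors, (d : ℕ).factorization p = 0 ∨ (e : ℕ).factorization p = 0 := by
    rw [← Nat.coprime_iff_gcd_eq_one, Nat.coprime_iff_forall_mem_primeFactors hn
      (Nat.dvd_of_mem_divisors d.2) (Nat.dvd_of_mem_divisors e.2), Subtype.forall]
  rw [mul_apply]
  simp only [adjMatrix, eigenvectorMatrix, eigenvectorWeight, of_apply, mul_diagonal,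
    transpose_apply, ← prod_mul_distrib]
  rw [← Fintype.prod_sum fun (p : n.primeFactors) (i : Fin 2) =>
    localEigenvector (n.factorization p) i ((d : ℕ).factorization p) *
      ((-1) ^ (i : ℕ) / √(4 * n.factorization p + 1)) *
      localEigenvector (n.factorization p) i ((e : ℕ).factorization p)]
  calc _ = ∏ p : n.primeFactors,
        if (d : ℕ).factorization p = 0 ∨ (e : ℕ).factorization p = 0 then (1 : ℝ) else 0 := by
          simp only [prod_boole, mem_univ, true_implies, hcop]
    _ = _ := prod_congr rfl fun p _ => by
      rw [← sum_localEigenvector_mul_localEigenvector]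
      exact sum_congr rfl fun i _ => by ring

theorem transpose_eigenvectorMatrix_mul (hn : n ≠ 0) :
    (eigenvectorMatrix n)ᵀ * eigenvectorMatrix n =
      diagonal fun ε => ∏ p : n.primeFactors,
        (localEigenvalue (n.factorization p) (ε p) ^ 2 + n.factorization p) := by
  ext ε ε'
  simp only [mul_apply, transpose_apply, eigenvectorMatrix, of_apply, ← prod_mul_distrib]
  rw [Nat.sum_divisors_prod_factorization hn fun p k =>
    localEigenvector (n.factorization p) (ε p) k * localEigenvector (n.factorization p) (ε' p) k]
  simp only [sum_range_localEigenvector_mul, Fintype.prod_ite_zero, diagonal_apply, funext_iff]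

theorem diagonal_eigenvectorWeight_mul_transpose_mul (hn : n ≠ 0) :
    diagonal (eigenvectorWeight n) * (eigenvectorMatrix n)ᵀ * eigenvectorMatrix n =
      diagonal (eigenvalue n) := by
  rw [Matrix.mul_assoc, transpose_eigenvectorMatrix_mul hn, diagonal_mul_diagonal]
  congr 1
  ext ε
  rw [eigenvectorWeight, eigenvalue, ← prod_mul_distrib]
  exact prod_congr rfl fun p _ => neg_one_pow_div_sqrt_mul_localEigenvalue_sq_add (ε p)

theorem eigenvalue_eq_neg_one_pow_mul_abs (ε : n.primeFactors → Fin 2) :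
    eigenvalue n ε = (-1) ^ (∑ p, (ε p : ℕ)) * |eigenvalue n ε| := by
  rw [eigenvalue, abs_prod, ← prod_pow_eq_pow_sum, ← prod_mul_distrib]
  exact prod_congr rfl fun p _ => localEigenvalue_eq_neg_one_pow_mul_abs (ε p)

theorem one_div_card_divisors_le_abs_eigenvalue (hn : n ≠ 0) (ε : n.primeFactors → Fin 2) :
    1 / (n.divisors.card : ℝ) ≤ |eigenvalue n ε| := by
  have hτ : (n.divisors.card : ℝ) = ∏ p : n.primeFactors, ((n.factorization p : ℝ) + 1) := by
    push_cast [Nat.card_divisors hn]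
    exact (prod_coe_sort n.primeFactors fun p => (n.factorization p : ℝ) + 1).symm
  rw [hτ, div_le_iff₀ (by positivity), eigenvalue, abs_prod, ← prod_mul_distrib]
  exact one_le_prod fun p _ =>
    one_le_abs_localEigenvalue_mul (Nat.pos_of_ne_zero (Finsupp.mem_support_iff.mp p.2)) (ε p)

theorem sum_abs_eigenvalue :
    ∑ ε, |eigenvalue n ε| = ∏ p ∈ n.primeFactors, √(4 * n.factorization p + 1) := by
  simp only [eigenvalue, abs_prod]
  rw [← Fintype.prod_sum fun (p : n.primeFactors) (i : Fin 2) =>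
    |localEigenvalue (n.factorization p) i|, ← prod_coe_sort n.primeFactors]
  exact prod_congr rfl fun p _ => by rw [Fin.sum_univ_two, abs_localEigenvalue_zero_add_one]

theorem sum_abs_eigenvalue_sub_one_div_card_divisors (hn : 1 < n) :
    ∑ ε, |eigenvalue n ε - 1 / n.divisors.card| =
      ∏ p ∈ n.primeFactors, √(4 * n.factorization p + 1) := by
  have : Nonempty n.primeFactors := (Nat.nonempty_primeFactors.2 hn).to_subtype
  calc _ = ∑ ε, (|eigenvalue n ε| - (-1) ^ (∑ p, (ε p : ℕ)) * (1 / n.divisors.card)) :=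
        sum_congr rfl fun ε _ => by
          conv_lhs => rw [eigenvalue_eq_neg_one_pow_mul_abs]
          exact abs_neg_one_pow_mul_sub _ (by positivity)
            (one_div_card_divisors_le_abs_eigenvalue (by omega) ε)
    _ = _ := by
      rw [sum_sub_distrib, ← sum_mul, sum_neg_one_pow_sum_eq_zero, zero_mul, sub_zero,
        sum_abs_eigenvalue]

end DivisorPrimeGraph

/-- For `n > 1` with prime factorization `n = p₁^{a₁} ⋯ p_r^{a_r}`, the energy of the
modified divisor prime graph of `n` is
`∑ i, |λ i - 1/τ(n)| = ∏ i, √(4 a_i + 1) + 1 - 2^r / τ(n)`,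
where `τ(n)` is the number of divisors of `n` and `r` the number of distinct prime
factors. -/
theorem energy_modifiedDivisorPrimeGraph (n : ℕ) (hn : 1 < n)
    (A : Matrix {d : ℕ // d ∈ n.divisors} {d : ℕ // d ∈ n.divisors} ℝ)
    (hA : ∀ u v : {d : ℕ // d ∈ n.divisors},
      A u v = if Nat.gcd u.1 v.1 = 1 then 1 else 0)
    (hHerm : A.IsHermitian) :
    ∑ i, |hHerm.eigenvalues i - 1 / (n.divisors.card : ℝ)| =
      (∏ p ∈ n.primeFactors, Real.sqrt (4 * (n.factorization p : ℝ) + 1)) + 1 -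
        (2 : ℝ) ^ n.primeFactors.card / (n.divisors.card : ℝ) := by
  have hn0 : n ≠ 0 := by omega
  have hA' : A = DivisorPrimeGraph.adjMatrix n := Matrix.ext hA
  have key := hHerm.card_nsmul_add_sum_eigenvalues_eq
    (by rw [← Matrix.mul_assoc, ← DivisorPrimeGraph.adjMatrix_eq hn0, hA'])
    (DivisorPrimeGraph.diagonal_eigenvectorWeight_mul_transpose_mul hn0)
    fun x => |x - 1 / (n.divisors.card : ℝ)|
  have hτ : (0 : ℝ) < n.divisors.card :=
    Nat.cast_pos.2 (card_pos.2 ⟨1, Nat.one_mem_divisors.2 hn0⟩)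
  simp only [RCLike.ofReal_real_eq_id, id,
    DivisorPrimeGraph.sum_abs_eigenvalue_sub_one_div_card_divisors hn, Fintype.card_fun,
    Fintype.card_coe, Fintype.card_fin, nsmul_eq_mul, zero_sub, abs_neg,
    abs_of_pos (one_div_pos.2 hτ)] at key
  rw [Nat.cast_pow, Nat.cast_ofNat, mul_one_div_cancel hτ.ne'] at key
  rw [div_eq_mul_one_div (2 ^ _)]
  linarith
end

section
/- Let n > 1 be an integer with exactly r distinct prime factors, and let A(n) be the adjacency matrix of the modified divisor prime graph G*_Dp(n). Then the rank of A(n) equals 2^r; equivalently, A(n) has exactly 2^r nonzero eigenvalues (with multiplicity), and 0 is an eigenvalue of multiplicity τ(n) − 2^r, where τ(n) is the number of divisors of n. -/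
/-!
Two divisors are coprime iff their sets of prime factors are disjoint, so `A(n)` is the
disjointness matrix on subsets of the prime factors of `n`, with the rows and columns of each
subset repeated once for every divisor with that radical. Repeating rows and columns does not
change the rank, and the disjointness matrix on `Finset α` is, after complementing the column
index, the inclusion matrix `[s ⊆ t]`. The latter is unitriangular for any linear extension of
inclusion, hence invertible, so the rank is `2 ^ r`.
-/

open Finset Function

namespace Matrix

theorem BlockTriangular.det_of_injective {m β R : Type*} [Fintype m] [DecidableEq m] [CommRing R]
    [LinearOrder β] {M : Matrix m m R} {b : m → β} (hb : Injective b)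
    (hM : M.BlockTriangular b) : M.det = ∏ i, M i i := by
  let e := Equiv.ofInjective b hb
  have hUpper : (M.submatrix e.symm e.symm).IsUpperTriangular := fun i j hji =>
    hM (by rwa [Equiv.apply_ofInjective_symm hb, Equiv.apply_ofInjective_symm hb])
  rw [← det_submatrix_equiv_self e.symm, det_of_isUpperTriangular hUpper]
  exact e.symm.prod_comp fun i => M i i

theorem rank_submatrix_of_surjective {m n m₀ n₀ R : Type*} [Fintype n] [Fintype n₀] [CommRing R]
    [StrongRankCondition R] (A : Matrix m n R) {f : m₀ → m} {g : n₀ → n}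
    (hf : Surjective f) (hg : Surjective g) : (A.submatrix f g).rank = A.rank := by
  refine le_antisymm (rank_submatrix_le A f g) ?_
  calc A.rank = ((A.submatrix f g).submatrix (surjInv hf) (surjInv hg)).rank := by
        rw [submatrix_submatrix, (rightInverse_surjInv hf).comp_eq_id,
          (rightInverse_surjInv hg).comp_eq_id, submatrix_id_id]
    _ ≤ (A.submatrix f g).rank := rank_submatrix_le _ _ _

end Matrix

open Matrix

section SubsetMatrix

variable (α R : Type*) [DecidableEq α] [CommRing R]

def subsetMatrix : Matrix (Finset α) (Finset α) R := of fun s t => if s ⊆ t then 1 else 0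

def disjointMatrix : Matrix (Finset α) (Finset α) R := of fun s t => if Disjoint s t then 1 else 0

theorem blockTriangular_subsetMatrix :
    (subsetMatrix α R).BlockTriangular toLinearExtension := by
  intro s t hts
  have hst : ¬s ⊆ t := fun h => (toLinearExtension.monotone h).not_gt hts
  simp [subsetMatrix, hst]

variable [Fintype α]

theorem det_subsetMatrix : (subsetMatrix α R).det = 1 := by
  have hb : Injective (toLinearExtension : Finset α → _) := fun _ _ => id
  rw [(blockTriangular_subsetMatrix α R).det_of_injective hb]
  simp only [subsetMatrix, of_apply, subset_refl, if_true, prod_const_one]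

theorem disjointMatrix_eq_submatrix_compl :
    disjointMatrix α R = (subsetMatrix α R).submatrix id compl := by
  ext s t
  simp [disjointMatrix, subsetMatrix, subset_compl_iff_disjoint_right]

theorem rank_disjointMatrix [Nontrivial R] :
    (disjointMatrix α R).rank = 2 ^ Fintype.card α := by
  have hUnit : IsUnit (subsetMatrix α R) := by
    rw [isUnit_iff_isUnit_det, det_subsetMatrix]
    exact isUnit_one
  rw [disjointMatrix_eq_submatrix_compl, rank_submatrix_of_surjective _ surjective_id
    compl_surjective, rank_of_isUnit _ hUnit, Fintype.card_finset]

end SubsetMatrix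

namespace Nat

variable (n : ℕ)

def primeFactorsOfDivisor (d : n.divisors) : Finset n.primeFactors :=
  d.1.primeFactors.subtype (· ∈ n.primeFactors)

theorem map_primeFactorsOfDivisor (d : n.divisors) :
    (primeFactorsOfDivisor n d).map (Embedding.subtype _) = d.1.primeFactors :=
  subtype_map_of_mem fun _ hp =>
    primeFactors_mono (dvd_of_mem_divisors d.2) (mem_divisors.mp d.2).2 hp

theorem coprime_iff_disjoint_primeFactorsOfDivisor (d e : n.divisors) :
    Coprime d e ↔ Disjoint (primeFactorsOfDivisor n d) (primeFactorsOfDivisor n e) := by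
  rw [← disjoint_map (Embedding.subtype _), map_primeFactorsOfDivisor,
    map_primeFactorsOfDivisor, disjoint_primeFactors (pos_of_mem_divisors d.2).ne'
      (pos_of_mem_divisors e.2).ne']

theorem primeFactorsOfDivisor_surjective (hn : n ≠ 0) : Surjective (primeFactorsOfDivisor n) := by
  intro S
  set P := S.map (Embedding.subtype _)
  have hP : P ⊆ n.primeFactors := map_subtype_subset S
  have hprod : (∏ p ∈ P, p).primeFactors = P :=
    primeFactors_prod fun p hp => prime_of_mem_primeFactors (hP hp)
  have hdvd : ∏ p ∈ P, p ∣ n := (prod_dvd_prod_of_subset _ _ _ hP).trans (prod_primeFactors_dvd n)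
  refine ⟨⟨_, mem_divisors.mpr ⟨hdvd, hn⟩⟩, map_injective (Embedding.subtype _) ?_⟩
  rw [map_primeFactorsOfDivisor, hprod]

end Nat

/-- For `n > 1` with exactly `r` distinct prime factors, the rank of the adjacency
matrix of the modified divisor prime graph of `n` equals `2 ^ r` (equivalently, it has
exactly `2 ^ r` nonzero eigenvalues and `0` is an eigenvalue of multiplicity
`τ(n) - 2 ^ r`). -/
theorem rank_modifiedDivisorPrimeGraph (n : ℕ) (hn : 1 < n)
    (A : Matrix {d : ℕ // d ∈ n.divisors} {d : ℕ // d ∈ n.divisors} ℝ)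
    (hA : ∀ u v : {d : ℕ // d ∈ n.divisors},
      A u v = if Nat.gcd u.1 v.1 = 1 then 1 else 0) :
    A.rank = 2 ^ n.primeFactors.card := by
  have hA_eq : A = (disjointMatrix n.primeFactors ℝ).submatrix
      (Nat.primeFactorsOfDivisor n) (Nat.primeFactorsOfDivisor n) := by
    ext u v
    simp only [hA, submatrix_apply, disjointMatrix, of_apply,
      ← Nat.coprime_iff_disjoint_primeFactorsOfDivisor, Nat.Coprime]
  have hsurj := Nat.primeFactorsOfDivisor_surjective n (by omega)
  rw [hA_eq, rank_submatrix_of_surjective _ hsurj hsurj, rank_disjointMatrix, Fintype.card_coe]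
end

section
/- Let n > 1 be an integer with prime factorization n = p_1^{a_1}···p_r^{a_r}. For every choice function x assigning to each i ∈ {1, …, r} a value x_i ∈ {1, 2}, the real number Π_{i=1}^r λ_{x_i}^{(i)} is an eigenvalue of the adjacency matrix A(n) of the modified divisor prime graph G*_Dp(n), where λ_1^{(i)} = (1 + √(4a_i+1))/2 and λ_2^{(i)} = (1 − √(4a_i+1))/2. -/
/-!
With `a_p = v_p(n)` and `c_p` a root of `X² = X + a_p`, the eigenvector is `Y(v) = ∏_{p ∣ v} c_p⁻¹`.
For a fixed divisor `u`, the summand `[gcd(u, v) = 1] · Y(v)` of `(A Y)(u)` equals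
`∏_{p ∣ v} [p ∤ u] c_p⁻¹`, a multiplicative function of `v`, so its sum over the divisors of `n`
factors as `∏_p (1 + a_p [p ∤ u] c_p⁻¹)`. By `c_p² = c_p + a_p` each factor is `c_p` when
`p ∤ u` and `1` when `p ∣ u`, which gives `(∏_p c_p) · Y(u)`.
-/

open Finset ArithmeticFunction
open scoped ArithmeticFunction.zeta

theorem Nat.sum_divisors_prod_primeFactors {R : Type*} [CommSemiring R] (f : ℕ → R) {n : ℕ}
    (hn : n ≠ 0) :
    ∑ d ∈ n.divisors, ∏ p ∈ d.primeFactors, f p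
      = ∏ p ∈ n.primeFactors, (1 + n.factorization p • f p) := by
  have hmul := (IsMultiplicative.prodPrimeFactors f).mul isMultiplicative_zeta.natCast
  have hprimePow : ∀ p ∈ n.primeFactors, ∀ k,
      (prodPrimeFactors f * ζ) (p ^ k) = 1 + k • f p := by
    intro p hp k
    have hp := Nat.prime_of_mem_primeFactors hp
    rw [coe_mul_zeta_apply, Nat.sum_divisors_prime_pow hp, sum_range_succ', add_comm]
    simp [prodPrimeFactors_apply, hp.ne_zero, Nat.primeFactors_prime_pow, hp]
  calc ∑ d ∈ n.divisors, ∏ p ∈ d.primeFactors, f p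
      = (prodPrimeFactors f * ζ) n := by
        rw [coe_mul_zeta_apply]
        exact sum_congr rfl fun d hd =>
          (prodPrimeFactors_apply (Nat.pos_of_mem_divisors hd).ne').symm
    _ = _ := by
        rw [hmul.multiplicative_factorization _ hn, Finsupp.prod, Nat.support_factorization]
        exact prod_congr rfl fun p hp => hprimePow p hp _

theorem Nat.coprime_iff_forall_mem_primeFactors_not_dvd {u v : ℕ} (hv : v ≠ 0) :
    u.Coprime v ↔ ∀ p ∈ v.primeFactors, ¬ p ∣ u := by
  refine ⟨fun huv p hp hpu => ?_, fun h => Nat.coprime_of_dvd fun p hp hpu hpv => ?_⟩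
  · exact (Nat.prime_of_mem_primeFactors hp).not_dvd_one
      (huv ▸ Nat.dvd_gcd hpu (Nat.dvd_of_mem_primeFactors hp))
  · exact h p (Nat.mem_primeFactors.2 ⟨hp, hpv, hv⟩) hpu

theorem Nat.prod_primeFactors_ite_not_dvd {M : Type*} [CommMonoidWithZero M] (f : ℕ → M)
    {u v : ℕ} (hv : v ≠ 0) :
    ∏ p ∈ v.primeFactors, (if ¬ p ∣ u then f p else 0)
      = if u.Coprime v then ∏ p ∈ v.primeFactors, f p else 0 := by
  rw [prod_ite_zero]
  exact if_congr (Nat.coprime_iff_forall_mem_primeFactors_not_dvd hv).symm rfl rfl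

theorem sum_divisors_ite_coprime_prodPrimeFactors_inv {K : Type*} [Field K] [CharZero K]
    {n u : ℕ} (hn : n ≠ 0) (hu : u ∣ n) (c : ℕ → K)
    (hc : ∀ p ∈ n.primeFactors, c p ^ 2 = c p + n.factorization p) :
    ∑ v ∈ n.divisors, (if u.Coprime v then prodPrimeFactors (fun p => (c p)⁻¹) v else 0)
      = (∏ p ∈ n.primeFactors, c p) * prodPrimeFactors (fun p => (c p)⁻¹) u := by
  have hfactor : ∀ p ∈ n.primeFactors,
      1 + n.factorization p • (if ¬ p ∣ u then (c p)⁻¹ else 0)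
        = c p * (if p ∣ u then (c p)⁻¹ else 1) := by
    intro p hp
    have hexp : (n.factorization p : K) ≠ 0 :=
      Nat.cast_ne_zero.2 (Finsupp.mem_support_iff.1 (by rwa [Nat.support_factorization]))
    have hcp : c p ≠ 0 := fun h => hexp (by linear_combination (c p - 1) * h - hc p hp)
    split_ifs
    · simp [hcp]
    · rw [nsmul_eq_mul]
      field_simp
      linear_combination (hc p hp).symm
  calc ∑ v ∈ n.divisors, (if u.Coprime v then prodPrimeFactors (fun p => (c p)⁻¹) v else 0)
      = ∑ v ∈ n.divisors, ∏ p ∈ v.primeFactors, (if ¬ p ∣ u then (c p)⁻¹ else 0) := by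
        refine sum_congr rfl fun v hv => ?_
        have hv0 : v ≠ 0 := (Nat.pos_of_mem_divisors hv).ne'
        rw [Nat.prod_primeFactors_ite_not_dvd _ hv0, prodPrimeFactors_apply hv0]
    _ = ∏ p ∈ n.primeFactors, c p * (if p ∣ u then (c p)⁻¹ else 1) := by
        rw [Nat.sum_divisors_prod_primeFactors _ hn]
        exact prod_congr rfl hfactor
    _ = _ := by
        rw [prod_mul_distrib, ← prod_filter, Nat.primeFactors_filter_dvd_of_dvd hn hu,
          prodPrimeFactors_apply (ne_zero_of_dvd_ne_zero hn hu)]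

theorem one_add_div_two_sq_of_sq_eq {a s : ℝ} (hs : s ^ 2 = 4 * a + 1) :
    ((1 + s) / 2) ^ 2 = (1 + s) / 2 + a := by
  linear_combination hs / 4

/-- For `n > 1` with prime factorization `n = p₁^{a₁} ⋯ p_r^{a_r}` and every choice
function `x` assigning to each prime factor one of the values `λ₁ = (1+√(4aᵢ+1))/2`,
`λ₂ = (1-√(4aᵢ+1))/2`, the product `∏ᵢ λ_{xᵢ}^{(i)}` is an eigenvalue of the adjacency
matrix of the modified divisor prime graph of `n`. -/
theorem prod_eigenvalue_modifiedDivisorPrimeGraph (n : ℕ) (hn : 1 < n)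
    (A : Matrix {d : ℕ // d ∈ n.divisors} {d : ℕ // d ∈ n.divisors} ℝ)
    (hA : ∀ u v : {d : ℕ // d ∈ n.divisors},
      A u v = if Nat.gcd u.1 v.1 = 1 then 1 else 0)
    (x : ℕ → Bool) :
    ∃ Y : {d : ℕ // d ∈ n.divisors} → ℝ, Y ≠ 0 ∧
      A.mulVec Y =
        (∏ p ∈ n.primeFactors,
          if x p then (1 + Real.sqrt (4 * (n.factorization p : ℝ) + 1)) / 2
          else (1 - Real.sqrt (4 * (n.factorization p : ℝ) + 1)) / 2) • Y := by
  have hn0 : n ≠ 0 := by omega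
  set c : ℕ → ℝ := fun p =>
    if x p then (1 + Real.sqrt (4 * (n.factorization p : ℝ) + 1)) / 2
    else (1 - Real.sqrt (4 * (n.factorization p : ℝ) + 1)) / 2
  have hc : ∀ p ∈ n.primeFactors, c p ^ 2 = c p + n.factorization p := by
    intro p _
    have hsqrt := Real.sq_sqrt (by positivity : (0 : ℝ) ≤ 4 * n.factorization p + 1)
    by_cases hxp : x p
    · simpa [c, hxp] using one_add_div_two_sq_of_sq_eq hsqrt
    · simpa [c, hxp, sub_eq_add_neg] using one_add_div_two_sq_of_sq_eq (s := -_) (by rwa [neg_sq])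
  set Y := prodPrimeFactors fun p => (c p)⁻¹
  refine ⟨fun d => Y d, Function.ne_iff.2 ⟨⟨1, Nat.one_mem_divisors.2 hn0⟩, by simp [Y]⟩, ?_⟩
  ext u
  rw [Matrix.mulVec, dotProduct, Pi.smul_apply, smul_eq_mul,
    ← sum_divisors_ite_coprime_prodPrimeFactors_inv hn0 (Nat.dvd_of_mem_divisors u.2) c hc,
    ← sum_coe_sort n.divisors]
  refine sum_congr rfl fun v _ => ?_
  simp [hA, Nat.Coprime, Y]
end

section
/- Let M be a real symmetric N×N matrix with eigenvalues λ_1, …, λ_N, let c be a real number, and let B be a positive semidefinite real matrix with B² = (M − cI)². Then the trace of B equals Σ_{j=1}^N |λ_j − c|. In particular, for a graph G of order N with σ self-loops and adjacency matrix A, the sum of the vertex energies over all vertices equals the energy of G: Σ_{i=1}^N E(v_i) = Σ_{j=1}^N |λ_j − σ/N|. -/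
/-! `B` and `cfc (|· - c|) M` are both positive semidefinite square roots of `(M - c • 1) ^ 2`,
so they coincide by uniqueness of positive square roots; in the eigenbasis of `M` the latter is
the diagonal matrix with entries `|λ j - c|`. -/

open Matrix in
theorem Matrix.IsHermitian.trace_cfc {n 𝕜 : Type*} [Fintype n] [DecidableEq n] [RCLike 𝕜]
    {A : Matrix n n 𝕜} (hA : A.IsHermitian) (f : ℝ → ℝ) :
    (cfc f A).trace = ∑ i, (f (hA.eigenvalues i) : 𝕜) := by
  rw [hA.cfc_eq, IsHermitian.cfc, Unitary.conjStarAlgAut_apply, trace_mul_cycle,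
    Unitary.coe_star_mul_self, one_mul, trace_diagonal]
  rfl

theorem cfc_abs_sub_const_sq {A : Type*} [Ring A] [StarRing A] [Algebra ℝ A]
    [TopologicalSpace A] [ContinuousFunctionalCalculus ℝ A IsSelfAdjoint] (a : A) (c : ℝ)
    (ha : IsSelfAdjoint a := by cfc_tac) :
    cfc (|· - c|) a ^ 2 = (a - algebraMap ℝ A c) ^ 2 :=
  calc cfc (|· - c|) a ^ 2 = cfc (fun x => |x - c| ^ 2) a := (cfc_pow _ 2 a).symm
    _ = cfc (fun x => (x - c) ^ 2) a := by simp_rw [sq_abs]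
    _ = (a - algebraMap ℝ A c) ^ 2 := by
      rw [cfc_pow (fun x => x - c) 2 a, cfc_sub (fun x => x) (fun _ => c) a, cfc_id' ℝ a,
        cfc_const c a]

open scoped MatrixOrder in
/-- If `M` is a real symmetric `N × N` matrix with eigenvalues `λ₁, …, λ_N`, `c` is
real, and `B` is positive semidefinite with `B² = (M - cI)²`, then
`trace B = ∑ j, |λ j - c|`. In particular, for a graph with `σ` self-loops the sum of
the vertex energies equals the energy of the graph. -/
theorem trace_abs_eq_sum_abs_eigenvalues (N : ℕ) (M B : Matrix (Fin N) (Fin N) ℝ)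
    (c : ℝ) (hM : M.IsHermitian) (hB : B.PosSemidef)
    (hBsq : B ^ 2 = (M - c • 1) ^ 2) :
    B.trace = ∑ j, |hM.eigenvalues j - c| := by
  have hB_eq : B = cfc (|· - c|) M := by
    refine (CFC.sq_eq_sq_iff B _ hB.nonneg (cfc_nonneg fun _ _ => abs_nonneg _)).mp ?_
    rw [hBsq, cfc_abs_sub_const_sq M c hM, Algebra.algebraMap_eq_smul_one]
  rw [hB_eq, hM.trace_cfc]
  rfl
end
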